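/- arXiv:2008.09429 — 2 statements merged into one kernel-verified Lean document; each statement's English description precedes it below -/
import Mathlib

section
/- Let L, U, Y : [0,T] → ℝ be càdlàg, let μ_δ and μ_α be finite Borel measures on (0,T], and let l, u : (0,T] → ℝ be Borel measurable such that l is μ_δ-essentially bounded above and −u is μ_α-essentially bounded above. Then the following are equivalent: (i) L(t) ≤ Y(t) ≤ U(t) for every t ∈ [0,T), l(t) ≤ Y(t−) for μ_δ-almost every t ∈ (0,T], and Y(t−) ≤ u(t) for μ_α-almost every t ∈ (0,T]; (ii) for every t ∈ (0,T], max(L(t−), l^{*,μ_δ}(t)) ≤ Y(t−) ≤ min(U(t−), −(−u)^{*,μ_α}(t)), where the max and min are taken in ℝ ∪ {±∞}. -/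
/-!
The pathwise constraints pass from `[0,T)` to the left limits on `(0,T]` by letting `s ↑ t`, and
back because the left limits `Y(s−)` converge to `Y(t)` as `s ↓ t`.

For the measure constraints, `φ^{n,ν}(t) + n t` is the `ν`-essential supremum of `φ(s) + n s`
over `(0,t]`. It dominates `φ(t) + n t` for `ν`-a.e. `t`, whence `φ ≤ φ^{*,ν}` a.e. Conversely,
if `φ ≤ Z` a.e. with `Z` upper semicontinuous from the left at `t` and `φ` essentially bounded
above, then for large `n` the penalty `n (s - t)` pushes the values of `φ` away from `t` below
any level `c > Z(t)`, so `φ^{*,ν}(t) ≤ Z(t)`. This is applied with `Z = Y(·−)`, which is left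
continuous, and to `−u` with `Z = −Y(·−)`.
-/

open MeasureTheory Filter Topology Set

/-- `gnProc ν φ n t` is the process
`φ^{n,ν}(t) = -n·t + inf{α ∈ ℝ : ∫_{(0,t]} (φ(s) + n·s - α)⁺ dν(s) = 0}`,
with values in `EReal` (it equals `⊥` exactly when `ν((0,t]) = 0`). -/
noncomputable def gnProc (ν : Measure ℝ) (φ : ℝ → ℝ) (n : ℕ) (t : ℝ) : EReal :=
  ((-((n : ℝ) * t) : ℝ) : EReal) +
    sInf ((fun a : ℝ => (a : EReal)) ''
      {a : ℝ | ∫⁻ s in Set.Ioc (0 : ℝ) t, ENNReal.ofReal (φ s + (n : ℝ) * s - a) ∂ν = 0})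

/-- `gStar ν φ t = inf_{n ∈ ℕ} φ^{n,ν}(t)`. -/
noncomputable def gStar (ν : Measure ℝ) (φ : ℝ → ℝ) (t : ℝ) : EReal :=
  ⨅ n : ℕ, gnProc ν φ n t

section LeftLimits

variable {α β : Type*} [LinearOrder α] [TopologicalSpace α] [OrderTopology α]
  [DenselyOrdered α] [NoMinOrder α] [TopologicalSpace β] [RegularSpace β]
  {f g : α → β} {t : α} {y : β}

theorem tendsto_nhdsLT_of_leftLim (hf : Tendsto f (𝓝[<] t) (𝓝 y))
    (hg : ∀ᶠ s in 𝓝[<] t, Tendsto f (𝓝[<] s) (𝓝 (g s))) :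
    Tendsto g (𝓝[<] t) (𝓝 y) := by
  rw [(closed_nhds_basis y).tendsto_right_iff]
  rintro V ⟨hV, hVc⟩
  obtain ⟨a, hat, hsub⟩ := mem_nhdsLT_iff_exists_Ioo_subset.mp (hf hV)
  filter_upwards [hg, Ioo_mem_nhdsLT hat] with s hs has
  exact hVc.mem_of_tendsto hs <| mem_of_superset (Ioo_mem_nhdsLT has.1)
    fun r hr => hsub ⟨hr.1, hr.2.trans has.2⟩

theorem tendsto_nhdsGT_of_leftLim [NoMaxOrder α] (hf : Tendsto f (𝓝[>] t) (𝓝 y))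
    (hg : ∀ᶠ s in 𝓝[>] t, Tendsto f (𝓝[<] s) (𝓝 (g s))) :
    Tendsto g (𝓝[>] t) (𝓝 y) := by
  rw [(closed_nhds_basis y).tendsto_right_iff]
  rintro V ⟨hV, hVc⟩
  obtain ⟨b, htb, hsub⟩ := mem_nhdsGT_iff_exists_Ioo_subset.mp (hf hV)
  filter_upwards [hg, Ioo_mem_nhdsGT htb] with s hs hts
  exact hVc.mem_of_tendsto hs <| mem_of_superset (Ioo_mem_nhdsLT hts.1)
    fun r hr => hsub ⟨hr.1, hr.2.trans hts.2⟩

end LeftLimits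

theorem measure_eq_zero_of_forall_measure_inter_Iic_eq_zero {α : Type*} [LinearOrder α]
    [TopologicalSpace α] [OrderTopology α] [SecondCountableTopology α] [MeasurableSpace α]
    (μ : Measure α) {S : Set α} (h : ∀ x ∈ S, μ (S ∩ Iic x) = 0) : μ S = 0 := by
  by_cases hmax : ∃ x ∈ S, ∀ y ∈ S, y ≤ x
  · obtain ⟨x, hxS, hx⟩ := hmax
    rw [← h x hxS, inter_eq_self_of_subset_left (t := Iic x) hx]
  · push Not at hmax
    obtain ⟨D, hDS, hDc, hD⟩ :=
      TopologicalSpace.isOpen_biUnion_countable S (fun x => Iio x) fun _ _ => isOpen_Iio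
    have hcover : S ⊆ ⋃ d ∈ D, S ∩ Iic d := by
      intro x hx
      obtain ⟨y, hyS, hxy⟩ := hmax x hx
      have : x ∈ ⋃ d ∈ D, Iio d := hD ▸ mem_biUnion hyS hxy
      obtain ⟨d, hd, hxd⟩ := mem_iUnion₂.mp this
      exact mem_biUnion hd ⟨hx, hxd.le⟩
    exact measure_mono_null hcover <| (measure_biUnion_null_iff hDc).mpr fun d hd => h d (hDS hd)

def essUpperBounds (ν : Measure ℝ) (g : ℝ → ℝ) (t : ℝ) : Set ℝ :=
  {a | ∫⁻ s in Ioc 0 t, ENNReal.ofReal (g s - a) ∂ν = 0}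

section EssUpperBounds

variable {ν : Measure ℝ} {g : ℝ → ℝ} {t a : ℝ}

theorem mem_essUpperBounds_of_ae_le (h : ∀ᵐ s ∂ν, s ∈ Ioc 0 t → g s ≤ a) :
    a ∈ essUpperBounds ν g t := by
  refine (lintegral_congr_ae ?_).trans (lintegral_zero (μ := ν.restrict (Ioc 0 t)))
  filter_upwards [(ae_restrict_iff' measurableSet_Ioc).mpr h] with s hs
  exact ENNReal.ofReal_eq_zero.mpr (sub_nonpos.mpr hs)

theorem ae_le_of_mem_essUpperBounds (hg : Measurable g) (ha : a ∈ essUpperBounds ν g t) :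
    ∀ᵐ s ∂ν, s ∈ Ioc 0 t → g s ≤ a := by
  filter_upwards [(setLIntegral_eq_zero_iff measurableSet_Ioc
    (hg.sub measurable_const).ennreal_ofReal).mp ha] with s hs hst
  exact sub_nonpos.mp (ENNReal.ofReal_eq_zero.mp (hs hst))

theorem essUpperBounds_mono {b : ℝ} (hab : a ≤ b) (ha : a ∈ essUpperBounds ν g t) :
    b ∈ essUpperBounds ν g t :=
  le_antisymm ((lintegral_mono fun s => ENNReal.ofReal_le_ofReal (by linarith)).trans_eq ha)
    zero_le

/-- Exceptions come from countably many rational levels `q`, and for each of them the times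
where `g` exceeds `q` although `g ≤ q` a.e. before them form a null set. -/
theorem ae_le_of_mem_essUpperBounds_self (hg : Measurable g) :
    ∀ᵐ t ∂ν, 0 < t → ∀ a ∈ essUpperBounds ν g t, g t ≤ a := by
  set B : ℚ → Set ℝ := fun q => {t | 0 < t ∧ (q : ℝ) < g t ∧ (q : ℝ) ∈ essUpperBounds ν g t}
  have hB : ∀ q, ν (B q) = 0 := fun q =>
    measure_eq_zero_of_forall_measure_inter_Iic_eq_zero ν fun x hx => by
      refine measure_mono_null (fun s hs => ?_)
        (ae_iff.mp (ae_le_of_mem_essUpperBounds hg hx.2.2))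
      exact fun hle => (hle ⟨hs.1.1, hs.2⟩).not_gt hs.1.2.1
  filter_upwards [ae_all_iff.mpr fun q => measure_eq_zero_iff_ae_notMem.mp (hB q)]
    with t ht htpos a ha
  by_contra! hlt
  obtain ⟨q, haq, hqg⟩ := exists_rat_btwn hlt
  exact ht q ⟨htpos, hqg, essUpperBounds_mono haq.le ha⟩

end EssUpperBounds

theorem gnProc_eq (ν : Measure ℝ) (φ : ℝ → ℝ) (n : ℕ) (t : ℝ) :
    gnProc ν φ n t = ((-(n * t) : ℝ) : EReal) +
      sInf ((↑) '' essUpperBounds ν (fun s => φ s + n * s) t) := rfl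

section Penalization

variable {ν : Measure ℝ} {φ : ℝ → ℝ} {t : ℝ}

theorem gnProc_le_of_ae_le {n : ℕ} {c : ℝ}
    (h : ∀ᵐ s ∂ν, s ∈ Ioc 0 t → φ s + n * s ≤ c + n * t) : gnProc ν φ n t ≤ c := by
  rw [gnProc_eq]
  calc _ ≤ ((-(n * t) : ℝ) : EReal) + ((c + n * t : ℝ) : EReal) :=
        add_le_add_right (sInf_le (mem_image_of_mem _ (mem_essUpperBounds_of_ae_le h))) _
    _ = c := by norm_cast; ring

theorem ae_coe_le_gnProc (hφ : Measurable φ) (n : ℕ) :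
    ∀ᵐ t ∂ν, 0 < t → (φ t : EReal) ≤ gnProc ν φ n t := by
  filter_upwards [ae_le_of_mem_essUpperBounds_self (ν := ν) (g := fun s => φ s + n * s)
    (hφ.add (measurable_id.const_mul _))] with t ht htpos
  rw [gnProc_eq]
  calc (φ t : EReal) = ((-(n * t) : ℝ) : EReal) + ((φ t + n * t : ℝ) : EReal) := by
        norm_cast; ring
    _ ≤ _ := add_le_add_right
        (le_sInf (forall_mem_image.2 fun a ha => EReal.coe_le_coe_iff.2 (ht htpos a ha))) _

theorem ae_coe_le_gStar (hφ : Measurable φ) : ∀ᵐ t ∂ν, 0 < t → (φ t : EReal) ≤ gStar ν φ t := by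
  filter_upwards [ae_all_iff.mpr fun n => ae_coe_le_gnProc (ν := ν) hφ n] with t ht htpos
  exact le_iInf fun n => ht n htpos

theorem gStar_le_of_ae_le {Z : ℝ → ℝ} {α : ℝ} (hα : ∀ᵐ s ∂ν, s ∈ Ioc 0 t → φ s ≤ α)
    (hφZ : ∀ᵐ s ∂ν, s ∈ Ioc 0 t → φ s ≤ Z s) (hZ : UpperSemicontinuousWithinAt Z (Iio t) t) :
    gStar ν φ t ≤ Z t := by
  refine EReal.le_of_forall_lt_iff_le.mp fun c hc => ?_
  obtain ⟨a, hat, ha⟩ :=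
    mem_nhdsLT_iff_exists_Ioo_subset.mp (hZ c (EReal.coe_lt_coe_iff.mp hc))
  obtain ⟨n, hn⟩ := exists_nat_ge ((α - c) / (t - a))
  have hpenalty : α - c ≤ n * (t - a) := (div_le_iff₀ (sub_pos.mpr hat)).mp hn
  refine (iInf_le _ n).trans (gnProc_le_of_ae_le ?_)
  filter_upwards [hα, hφZ] with s hsα hsZ hs
  rcases le_or_gt s a with hsa | has
  · nlinarith [hsα hs, mul_le_mul_of_nonneg_left hsa n.cast_nonneg]
  · have hns : (n : ℝ) * s ≤ n * t := mul_le_mul_of_nonneg_left hs.2 n.cast_nonneg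
    rcases hs.2.lt_or_eq with hst | rfl
    · have hZs : Z s < c := ha ⟨has, hst⟩
      linarith [hsZ hs]
    · linarith [hsZ hs, EReal.coe_lt_coe_iff.mp hc]

theorem le_neg_gStar_neg_of_ae_le {Z : ℝ → ℝ} {α : ℝ} (hα : ∀ᵐ s ∂ν, s ∈ Ioc 0 t → -φ s ≤ α)
    (hZφ : ∀ᵐ s ∂ν, s ∈ Ioc 0 t → Z s ≤ φ s) (hZ : LowerSemicontinuousWithinAt Z (Iio t) t) :
    (Z t : EReal) ≤ -gStar ν (fun s => -φ s) t := by
  have hnegZ : UpperSemicontinuousWithinAt (fun s => -Z s) (Iio t) t := fun y hy =>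
    (hZ (-y) (by linarith)).mono fun s hs => by linarith
  have := gStar_le_of_ae_le hα (hZφ.mono fun s hs hst => neg_le_neg (hs hst)) hnegZ
  exact EReal.le_neg.mpr (by rwa [← EReal.coe_neg])

theorem ae_neg_gStar_neg_le (hφ : Measurable φ) :
    ∀ᵐ t ∂ν, 0 < t → -gStar ν (fun s => -φ s) t ≤ φ t := by
  filter_upwards [ae_coe_le_gStar (ν := ν) (φ := fun s => -φ s) hφ.neg] with t ht htpos
  simpa using EReal.neg_le_neg_iff.mpr (ht htpos)

end Penalization

section Cadlag

variable {T t : ℝ} {A B Am Bm : ℝ → ℝ}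

theorem continuousWithinAt_Iio_of_leftLim (ht : t ∈ Ioc 0 T)
    (hAl : ∀ s ∈ Ioc 0 T, Tendsto A (𝓝[<] s) (𝓝 (Am s))) : ContinuousWithinAt Am (Iio t) t :=
  tendsto_nhdsLT_of_leftLim (hAl t ht) <|
    mem_of_superset (Ioo_mem_nhdsLT ht.1) fun s hs => hAl s ⟨hs.1, hs.2.le.trans ht.2⟩

theorem le_of_le_on_Ico_of_tendsto_nhdsLT {a b : ℝ} (ht : t ∈ Ioc 0 T)
    (hA : Tendsto A (𝓝[<] t) (𝓝 a)) (hB : Tendsto B (𝓝[<] t) (𝓝 b))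
    (hle : ∀ s ∈ Ico 0 T, A s ≤ B s) : a ≤ b :=
  le_of_tendsto_of_tendsto hA hB <|
    mem_of_superset (Ioo_mem_nhdsLT ht.1) fun s hs => hle s ⟨hs.1.le, hs.2.trans_le ht.2⟩

theorem le_of_leftLim_le_on_Ioc (ht : t ∈ Ico 0 T)
    (hA : ContinuousWithinAt A (Ici t) t) (hB : ContinuousWithinAt B (Ici t) t)
    (hAl : ∀ s ∈ Ioc 0 T, Tendsto A (𝓝[<] s) (𝓝 (Am s)))
    (hBl : ∀ s ∈ Ioc 0 T, Tendsto B (𝓝[<] s) (𝓝 (Bm s)))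
    (hle : ∀ s ∈ Ioc 0 T, Am s ≤ Bm s) : A t ≤ B t := by
  have hnear : ∀ᶠ s in 𝓝[>] t, s ∈ Ioc 0 T :=
    mem_of_superset (Ioo_mem_nhdsGT ht.2) fun s hs => ⟨ht.1.trans_lt hs.1, hs.2.le⟩
  exact le_of_tendsto_of_tendsto
    (tendsto_nhdsGT_of_leftLim (hA.mono Ioi_subset_Ici_self) (hnear.mono hAl))
    (tendsto_nhdsGT_of_leftLim (hB.mono Ioi_subset_Ici_self) (hnear.mono hBl))
    (hnear.mono hle)

end Cadlag

theorem stmt_14_general (T : ℝ)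
    (μδ μα : Measure ℝ)
    (l u : ℝ → ℝ) (hl : Measurable l) (hu : Measurable u)
    (αl : ℝ) (hbl : ∀ᵐ s ∂μδ, s ∈ Set.Ioc (0 : ℝ) T → l s ≤ αl)
    (αu : ℝ) (hbu : ∀ᵐ s ∂μα, s ∈ Set.Ioc (0 : ℝ) T → -u s ≤ αu)
    (L U Y Lm Um Ym : ℝ → ℝ)
    (hLr : ∀ t ∈ Set.Ico (0 : ℝ) T, ContinuousWithinAt L (Set.Ici t) t)
    (hUr : ∀ t ∈ Set.Ico (0 : ℝ) T, ContinuousWithinAt U (Set.Ici t) t)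
    (hYr : ∀ t ∈ Set.Ico (0 : ℝ) T, ContinuousWithinAt Y (Set.Ici t) t)
    (hLl : ∀ t ∈ Set.Ioc (0 : ℝ) T, Tendsto L (𝓝[<] t) (𝓝 (Lm t)))
    (hUl : ∀ t ∈ Set.Ioc (0 : ℝ) T, Tendsto U (𝓝[<] t) (𝓝 (Um t)))
    (hYl : ∀ t ∈ Set.Ioc (0 : ℝ) T, Tendsto Y (𝓝[<] t) (𝓝 (Ym t))) :
    ((∀ t ∈ Set.Ico (0 : ℝ) T, L t ≤ Y t ∧ Y t ≤ U t) ∧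
     (∀ᵐ t ∂μδ, t ∈ Set.Ioc (0 : ℝ) T → l t ≤ Ym t) ∧
     (∀ᵐ t ∂μα, t ∈ Set.Ioc (0 : ℝ) T → Ym t ≤ u t)) ↔
    (∀ t ∈ Set.Ioc (0 : ℝ) T,
      max ((Lm t : ℝ) : EReal) (gStar μδ l t) ≤ ((Ym t : ℝ) : EReal) ∧
      ((Ym t : ℝ) : EReal) ≤ min ((Um t : ℝ) : EReal) (-(gStar μα (fun s => -u s) t))) := by
  constructor
  · rintro ⟨hLYU, hlY, hYu⟩ t ht
    have hrestrict {ν : Measure ℝ} {P : ℝ → Prop} (h : ∀ᵐ s ∂ν, s ∈ Ioc 0 T → P s) :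
        ∀ᵐ s ∂ν, s ∈ Ioc 0 t → P s :=
      h.mono fun s hs hst => hs (Ioc_subset_Ioc_right ht.2 hst)
    have hYm := continuousWithinAt_Iio_of_leftLim ht hYl
    refine ⟨max_le (EReal.coe_le_coe_iff.mpr ?_) ?_, le_min (EReal.coe_le_coe_iff.mpr ?_) ?_⟩
    · exact le_of_le_on_Ico_of_tendsto_nhdsLT ht (hLl t ht) (hYl t ht) fun s hs => (hLYU s hs).1
    · exact gStar_le_of_ae_le (hrestrict hbl) (hrestrict hlY) hYm.upperSemicontinuousWithinAt
    · exact le_of_le_on_Ico_of_tendsto_nhdsLT ht (hYl t ht) (hUl t ht) fun s hs => (hLYU s hs).2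
    · exact le_neg_gStar_neg_of_ae_le (hrestrict hbu) (hrestrict hYu)
        hYm.lowerSemicontinuousWithinAt
  · intro h
    refine ⟨fun t ht => ⟨?_, ?_⟩, ?_, ?_⟩
    · exact le_of_leftLim_le_on_Ioc ht (hLr t ht) (hYr t ht) hLl hYl fun s hs =>
        EReal.coe_le_coe_iff.mp ((le_max_left _ _).trans (h s hs).1)
    · exact le_of_leftLim_le_on_Ioc ht (hYr t ht) (hUr t ht) hYl hUl fun s hs =>
        EReal.coe_le_coe_iff.mp ((h s hs).2.trans (min_le_left _ _))
    · filter_upwards [ae_coe_le_gStar (ν := μδ) hl] with t hlt ht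
      exact EReal.coe_le_coe_iff.mp ((hlt ht.1).trans ((le_max_right _ _).trans (h t ht).1))
    · filter_upwards [ae_neg_gStar_neg_le (ν := μα) hu] with t hut ht
      exact EReal.coe_le_coe_iff.mp (((h t ht).2.trans (min_le_right _ _)).trans (hut ht.1))

/-- Let `L, U, Y : [0,T] → ℝ` be càdlàg (with left limits `Lm, Um, Ym`), `μδ, μα` finite
Borel measures on `(0,T]`, and `l, u : (0,T] → ℝ` Borel measurable, `l` μδ-essentially
bounded above and `−u` μα-essentially bounded above. Then: (`L ≤ Y ≤ U` on `[0,T)`,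
`l(t) ≤ Y(t−)` μδ-a.e. and `Y(t−) ≤ u(t)` μα-a.e. on `(0,T]`) if and only if for every
`t ∈ (0,T]`, `max(L(t−), l^{*,μδ}(t)) ≤ Y(t−) ≤ min(U(t−), −(−u)^{*,μα}(t))`, the max and
min taken in `ℝ ∪ {±∞}`. -/
theorem stmt_14 (T : ℝ) (hT : 0 < T)
    (μδ μα : Measure ℝ) [IsFiniteMeasure μδ] [IsFiniteMeasure μα]
    (hsuppδ : μδ (Set.Ioc (0 : ℝ) T)ᶜ = 0) (hsuppα : μα (Set.Ioc (0 : ℝ) T)ᶜ = 0)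
    (l u : ℝ → ℝ) (hl : Measurable l) (hu : Measurable u)
    (αl : ℝ) (hbl : ∀ᵐ s ∂μδ, s ∈ Set.Ioc (0 : ℝ) T → l s ≤ αl)
    (αu : ℝ) (hbu : ∀ᵐ s ∂μα, s ∈ Set.Ioc (0 : ℝ) T → -u s ≤ αu)
    (L U Y Lm Um Ym : ℝ → ℝ)
    (hLr : ∀ t ∈ Set.Ico (0 : ℝ) T, ContinuousWithinAt L (Set.Ici t) t)
    (hUr : ∀ t ∈ Set.Ico (0 : ℝ) T, ContinuousWithinAt U (Set.Ici t) t)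
    (hYr : ∀ t ∈ Set.Ico (0 : ℝ) T, ContinuousWithinAt Y (Set.Ici t) t)
    (hLl : ∀ t ∈ Set.Ioc (0 : ℝ) T, Tendsto L (𝓝[<] t) (𝓝 (Lm t)))
    (hUl : ∀ t ∈ Set.Ioc (0 : ℝ) T, Tendsto U (𝓝[<] t) (𝓝 (Um t)))
    (hYl : ∀ t ∈ Set.Ioc (0 : ℝ) T, Tendsto Y (𝓝[<] t) (𝓝 (Ym t))) :
    ((∀ t ∈ Set.Ico (0 : ℝ) T, L t ≤ Y t ∧ Y t ≤ U t) ∧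
     (∀ᵐ t ∂μδ, t ∈ Set.Ioc (0 : ℝ) T → l t ≤ Ym t) ∧
     (∀ᵐ t ∂μα, t ∈ Set.Ioc (0 : ℝ) T → Ym t ≤ u t)) ↔
    (∀ t ∈ Set.Ioc (0 : ℝ) T,
      max ((Lm t : ℝ) : EReal) (gStar μδ l t) ≤ ((Ym t : ℝ) : EReal) ∧
      ((Ym t : ℝ) : EReal) ≤ min ((Um t : ℝ) : EReal) (-(gStar μα (fun s => -u s) t))) :=
  stmt_14_general T μδ μα l u hl hu αl hbl αu hbu L U Y Lm Um Ym hLr hUr hYr hLl hUl hYl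
end

section
/- Let L, Y : [0,T] → ℝ be càdlàg with L(t) ≤ Y(t) for all t ∈ [0,T), let μ and κ be finite Borel measures on (0,T], and let l : (0,T] → ℝ be Borel measurable with l(t) ≤ Y(t−) for μ-almost every t ∈ (0,T] (so that l is μ-essentially bounded above). Then the following are equivalent: (a) for every càdlàg L* : [0,T] → ℝ satisfying L(t) ≤ L*(t) ≤ Y(t) for all t ∈ [0,T) and l(t) ≤ L*(t−) for μ-almost every t ∈ (0,T], one has ∫_{(0,T]} (Y(t−) − L*(t−)) dκ(t) = 0; (b) ∫_{(0,T]} (Y(t−) − max(L(t−), l^{*,μ}(t))) dκ(t) = 0, where the integrand in (b) is nonnegative, the max being taken in ℝ ∪ {−∞}. -/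
/-!
If `L*` is admissible, then `L*(t−) ≥ L(t−)`, and `L*(t−) ≥ l^{*,μ}(t)`: near `t` the left
limits of `L*` are at most `L*(t−) + ε`, away from `t` they are bounded, and a large slope `n`
absorbs that bound, so `l(s) + n s ≤ L*(t−) + ε + n t` for `μ`-a.e. `s ∈ (0,t]`.
This gives (b) ⇒ (a).

For (a) ⇒ (b), test (a) on the càdlàg barriers `max(L, min(Y, G))`, where `G = c` on `[p,q)` and
`G = M ≥ sup Y(·−)` elsewhere; such a barrier is admissible as soon as `l ≤ c` `μ`-a.e. on
`(p,q]`, and (a) then yields `Y(t−) ≤ max(L(t−), c)` for `κ`-a.e. `t ∈ (p,q]`. Countably many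
cells suffice: if `l^{*,μ}(t) < c`, then some `l^{n,μ}(t) < c`, and `t` lies in a cell `(p,q]`
with `p, c` rational, on which `l ≤ c` `μ`-a.e., and whose right end `q` is rational or a jump of
the nondecreasing function `t ↦ ess sup_{(0,t]} (l(s) + n s)`.
-/

open MeasureTheory Filter Topology Set

/-- The canonical map `EReal → ℝ≥0∞`, sending negatives to `0` and `⊤` to `⊤`. -/
noncomputable def erealToENNReal (x : EReal) : ENNReal :=
  if x = ⊤ then ⊤ else ENNReal.ofReal x.toReal

structure IsCadlagOn (f fm : ℝ → ℝ) (T : ℝ) : Prop where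
  continuousWithinAt_Ici : ∀ t ∈ Ico (0 : ℝ) T, ContinuousWithinAt f (Ici t) t
  tendsto_nhdsLT : ∀ t ∈ Ioc (0 : ℝ) T, Tendsto f (𝓝[<] t) (𝓝 (fm t))

theorem eventually_mem_Ico_nhdsLT {t T : ℝ} (ht : t ∈ Ioc (0 : ℝ) T) :
    ∀ᶠ s in 𝓝[<] t, s ∈ Ico (0 : ℝ) T := by
  filter_upwards [Ioo_mem_nhdsLT ht.1] with s hs using ⟨hs.1.le, hs.2.trans_le ht.2⟩

theorem aemeasurable_restrict_of_tendsto_nhdsLT {f g : ℝ → ℝ} {s : Set ℝ} (μ : Measure ℝ)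
    (hs : MeasurableSet s) (h : ∀ t ∈ s, Tendsto f (𝓝[<] t) (𝓝 (g t))) :
    AEMeasurable g (μ.restrict s) := by
  -- `d m t` is the largest point of the grid `ℤ / (m + 1)` strictly below `t`
  set d : ℕ → ℝ → ℝ := fun m t => (⌈t * (m + 1)⌉ - 1) / (m + 1)
  have hd_lt (m : ℕ) (t : ℝ) : d m t < t := by
    rw [div_lt_iff₀ (by positivity)]
    linarith [Int.ceil_lt_add_one (t * (m + 1))]
  have hd_ge (m : ℕ) (t : ℝ) : t - 1 / (m + 1) ≤ d m t := by
    rw [le_div_iff₀ (by positivity), sub_mul, one_div_mul_cancel (by positivity)]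
    linarith [Int.le_ceil (t * (m + 1))]
  refine aemeasurable_of_tendsto_metrizable_ae' (f := fun m t => f (d m t)) (fun m => ?_) ?_
  · exact ((measurable_of_countable fun k : ℤ => f ((k - 1) / (m + 1))).comp
      (Int.measurable_ceil.comp (measurable_id.mul_const _))).aemeasurable
  · filter_upwards [ae_restrict_mem hs] with t ht
    have hdt : Tendsto (fun m => d m t) atTop (𝓝 t) := by
      refine tendsto_of_tendsto_of_tendsto_of_le_of_le ?_ tendsto_const_nhds
        (fun m => hd_ge m t) (fun m => (hd_lt m t).le)
      simpa using tendsto_const_nhds.sub (tendsto_one_div_add_atTop_nhds_zero_nat (𝕜 := ℝ))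
    exact (h t ht).comp (tendsto_nhdsWithin_of_tendsto_nhds_of_eventually_within _ hdt
      (Eventually.of_forall fun m => hd_lt m t))

theorem isCadlagOn_ite_Ico (p q a b T : ℝ) :
    IsCadlagOn (fun s => if s ∈ Ico p q then a else b)
      (fun s => if s ∈ Ioc p q then a else b) T := by
  constructor
  · intro t _
    have hp : ∀ᶠ s in 𝓝[≥] t, (p ≤ s ↔ p ≤ t) := by
      rcases le_or_gt p t with h | h
      · filter_upwards [self_mem_nhdsWithin] with s hs using iff_of_true (h.trans hs) h
      · filter_upwards [nhdsWithin_le_nhds (eventually_lt_nhds h)] with s hs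
        exact iff_of_false hs.not_ge h.not_ge
    have hq : ∀ᶠ s in 𝓝[≥] t, (s < q ↔ t < q) := by
      rcases lt_or_ge t q with h | h
      · filter_upwards [nhdsWithin_le_nhds (eventually_lt_nhds h)] with s hs using iff_of_true hs h
      · filter_upwards [self_mem_nhdsWithin] with s hs
        exact iff_of_false (h.trans hs).not_gt h.not_gt
    refine continuousWithinAt_const.congr_of_eventuallyEq ?_ rfl
    filter_upwards [hp, hq] with s hps hqs
    simp only [mem_Ico, hps, hqs]
  · intro t _
    have hp : ∀ᶠ s in 𝓝[<] t, (p ≤ s ↔ p < t) := by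
      rcases lt_or_ge p t with h | h
      · filter_upwards [nhdsWithin_le_nhds (eventually_gt_nhds h)] with s hs
        exact iff_of_true hs.le h
      · filter_upwards [self_mem_nhdsWithin] with s hs
        exact iff_of_false (hs.trans_le h).not_ge h.not_gt
    have hq : ∀ᶠ s in 𝓝[<] t, (s < q ↔ t ≤ q) := by
      rcases le_or_gt t q with h | h
      · filter_upwards [self_mem_nhdsWithin] with s hs using iff_of_true (hs.trans_le h) h
      · filter_upwards [nhdsWithin_le_nhds (eventually_gt_nhds h)] with s hs
        exact iff_of_false hs.not_gt h.not_ge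
    refine tendsto_const_nhds.congr' ?_
    filter_upwards [hp, hq] with s hps hqs
    simp only [mem_Ico, mem_Ioc, hps, hqs]

namespace IsCadlagOn

variable {f fm g gm : ℝ → ℝ} {T : ℝ}

protected theorem max (hf : IsCadlagOn f fm T) (hg : IsCadlagOn g gm T) :
    IsCadlagOn (fun t => max (f t) (g t)) (fun t => max (fm t) (gm t)) T :=
  ⟨fun t ht => (hf.1 t ht).max (hg.1 t ht), fun t ht => (hf.2 t ht).max (hg.2 t ht)⟩

protected theorem min (hf : IsCadlagOn f fm T) (hg : IsCadlagOn g gm T) :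
    IsCadlagOn (fun t => min (f t) (g t)) (fun t => min (fm t) (gm t)) T :=
  ⟨fun t ht => (hf.1 t ht).min (hg.1 t ht), fun t ht => (hf.2 t ht).min (hg.2 t ht)⟩

theorem leftLim_le (hf : IsCadlagOn f fm T) (hg : IsCadlagOn g gm T)
    (h : ∀ t ∈ Ico (0 : ℝ) T, f t ≤ g t) {t : ℝ} (ht : t ∈ Ioc (0 : ℝ) T) : fm t ≤ gm t :=
  le_of_tendsto_of_tendsto (hf.2 t ht) (hg.2 t ht)
    ((eventually_mem_Ico_nhdsLT ht).mono fun s hs => h s hs)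

theorem bddAbove_image (hf : IsCadlagOn f fm T) : BddAbove (f '' Ico 0 T) := by
  have hloc : ∀ x ∈ Icc (0 : ℝ) T,
      ∀ᶠ s in 𝓝 x, s ∈ Ico (0 : ℝ) T → f s ≤ max (f x) (fm x) + 1 := by
    intro x hx
    rw [← nhdsLT_sup_nhdsGE, eventually_sup]
    constructor
    · rcases hx.1.eq_or_lt with rfl | hx0
      · filter_upwards [self_mem_nhdsWithin] with s hs hs' using absurd hs'.1 hs.not_ge
      · filter_upwards [(hf.2 x ⟨hx0, hx.2⟩).eventually (eventually_lt_nhds (lt_add_one _))]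
          with s hs _
        linarith [le_max_right (f x) (fm x)]
    · rcases hx.2.lt_or_eq with hxT | rfl
      · filter_upwards [(hf.1 x ⟨hx.1, hxT⟩).eventually (eventually_lt_nhds (lt_add_one _))]
          with s hs _
        linarith [le_max_left (f x) (fm x)]
      · filter_upwards [self_mem_nhdsWithin] with s hs hs' using absurd hs'.2 (not_lt.2 hs)
  have h := isCompact_Icc.induction_on (p := fun A => BddAbove (f '' (A ∩ Ico 0 T)))
    (by simp) (fun _ _ hst hB => hB.mono (image_mono (inter_subset_inter_left _ hst)))
    (fun _ _ hs ht => by simpa only [union_inter_distrib_right, image_union] using hs.union ht)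
    (fun x hx => ⟨_, nhdsWithin_le_nhds (hloc x hx),
      ⟨_, forall_mem_image.2 fun s hs => hs.1 hs.2⟩⟩)
  rwa [inter_eq_right.2 Ico_subset_Icc_self] at h

theorem exists_leftLim_le (hf : IsCadlagOn f fm T) : ∃ M, ∀ t ∈ Ioc (0 : ℝ) T, fm t ≤ M := by
  obtain ⟨M, hM⟩ := hf.bddAbove_image
  exact ⟨M, fun t ht => le_of_tendsto (hf.2 t ht)
    ((eventually_mem_Ico_nhdsLT ht).mono fun s hs => hM (mem_image_of_mem f hs))⟩

theorem exists_forall_leftLim_le (hf : IsCadlagOn f fm T) {t c : ℝ} (ht : t ∈ Ioc (0 : ℝ) T)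
    (hc : fm t < c) : ∃ a ∈ Ico 0 t, ∀ s ∈ Ioc a t, fm s ≤ c := by
  obtain ⟨a, hat, ha⟩ := mem_nhdsLT_iff_exists_Ioo_subset.1
    ((hf.2 t ht).eventually (eventually_lt_nhds hc))
  refine ⟨max a 0, ⟨le_max_right _ _, max_lt hat ht.1⟩, fun s hs => ?_⟩
  rcases hs.2.lt_or_eq with hst | rfl
  · refine le_of_tendsto (hf.2 s ⟨(le_max_right a 0).trans_lt hs.1, hst.le.trans ht.2⟩) ?_
    filter_upwards [Ioo_mem_nhdsLT hs.1] with u hu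
    exact (ha ⟨(le_max_left a 0).trans_lt hu.1, hu.2.trans hst⟩).le
  · exact hc.le

theorem aemeasurable_leftLim (hf : IsCadlagOn f fm T) (μ : Measure ℝ) :
    AEMeasurable fm (μ.restrict (Ioc 0 T)) :=
  aemeasurable_restrict_of_tendsto_nhdsLT μ measurableSet_Ioc hf.2

theorem ae_leftLim_le_of_lintegral_eq_zero (hf : IsCadlagOn f fm T) (hg : IsCadlagOn g gm T)
    {μ : Measure ℝ} (h : ∫⁻ t in Ioc (0 : ℝ) T, ENNReal.ofReal (fm t - gm t) ∂μ = 0) :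
    ∀ᵐ t ∂μ.restrict (Ioc 0 T), fm t ≤ gm t := by
  have hmeas := ((hf.aemeasurable_leftLim μ).sub (hg.aemeasurable_leftLim μ)).ennreal_ofReal
  filter_upwards [(lintegral_eq_zero_iff' hmeas).1 h] with t ht
  simpa using ht

end IsCadlagOn

/-- The essential supremum of `s ↦ φ s + n s` over `(0, t]`, in the form used by `gnProc`. -/
noncomputable def runningEssSup (ν : Measure ℝ) (φ : ℝ → ℝ) (n : ℕ) (t : ℝ) : EReal :=
  sInf ((fun a : ℝ => (a : EReal)) ''
    {a : ℝ | ∫⁻ s in Ioc (0 : ℝ) t, ENNReal.ofReal (φ s + (n : ℝ) * s - a) ∂ν = 0})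

section RunningEssSup

variable {ν : Measure ℝ} {φ : ℝ → ℝ} {n : ℕ} {t : ℝ}

theorem gnProc_eq_coe_add_runningEssSup :
    gnProc ν φ n t = ((-((n : ℝ) * t) : ℝ) : EReal) + runningEssSup ν φ n t :=
  rfl

theorem runningEssSup_mono : Monotone (runningEssSup ν φ n) := fun _ _ hst =>
  sInf_le_sInf <| image_mono fun _ ha =>
    nonpos_iff_eq_zero.1 ((lintegral_mono_set (Ioc_subset_Ioc_right hst)).trans_eq ha)

theorem runningEssSup_le_of_ae_le {a : ℝ}
    (h : ∀ᵐ s ∂ν.restrict (Ioc 0 t), φ s + n * s ≤ a) : runningEssSup ν φ n t ≤ a :=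
  sInf_le ⟨a, (lintegral_congr_ae (h.mono fun _ hs =>
    ENNReal.ofReal_eq_zero.2 (sub_nonpos.2 hs))).trans lintegral_zero, rfl⟩

theorem ae_le_of_runningEssSup_lt (hφ : Measurable φ) {a : ℝ}
    (h : runningEssSup ν φ n t < a) : ∀ᵐ s ∂ν.restrict (Ioc 0 t), φ s + n * s ≤ a := by
  obtain ⟨_, ⟨b, hb, rfl⟩, hba⟩ := sInf_lt_iff.1 h
  have hmeas : Measurable fun s => ENNReal.ofReal (φ s + n * s - b) := by fun_prop
  filter_upwards [(lintegral_eq_zero_iff hmeas).1 hb] with s hs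
  linarith [ENNReal.ofReal_eq_zero.1 hs, EReal.coe_lt_coe_iff.1 hba]

theorem runningEssSup_lt_of_gnProc_lt {c : ℝ} (h : gnProc ν φ n t < c) :
    runningEssSup ν φ n t < ((c + n * t : ℝ) : EReal) := by
  rw [gnProc_eq_coe_add_runningEssSup, add_comm] at h
  have := (EReal.lt_sub_iff_add_lt (a := c) (Or.inl (EReal.coe_ne_bot (-(n * t))))
    (Or.inl (EReal.coe_ne_top _))).2 h
  rwa [← EReal.coe_sub, sub_neg_eq_add] at this

end RunningEssSup

theorem IsCadlagOn.gStar_le_leftLim {f fm φ : ℝ → ℝ} {T t : ℝ} {ν : Measure ℝ}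
    (hf : IsCadlagOn f fm T) (hφ : ∀ᵐ s ∂ν, s ∈ Ioc 0 T → φ s ≤ fm s)
    (ht : t ∈ Ioc 0 T) : gStar ν φ t ≤ fm t := by
  obtain ⟨M, hM⟩ := hf.exists_leftLim_le
  refine EReal.le_of_forall_lt_iff_le.1 fun c hc => ?_
  obtain ⟨a, ha, hac⟩ := hf.exists_forall_leftLim_le ht (EReal.coe_lt_coe_iff.1 hc)
  obtain ⟨n, hn⟩ := exists_nat_ge ((M - c) / (t - a))
  have hn' : M - c ≤ n * (t - a) := by rwa [div_le_iff₀ (sub_pos.2 ha.2)] at hn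
  have hF : runningEssSup ν φ n t ≤ ((c + n * t : ℝ) : EReal) := by
    apply runningEssSup_le_of_ae_le
    rw [ae_restrict_iff' measurableSet_Ioc]
    filter_upwards [hφ] with s hs hst
    have hsT : s ∈ Ioc 0 T := ⟨hst.1, hst.2.trans ht.2⟩
    have : fm s ≤ c + n * (t - s) := by
      rcases le_or_gt s a with hsa | has
      · nlinarith [hM s hsT, mul_le_mul_of_nonneg_left (sub_le_sub_left hsa t) n.cast_nonneg]
      · nlinarith [hac s ⟨has, hst.2⟩, mul_nonneg n.cast_nonneg (sub_nonneg.2 hst.2)]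
    linarith [hs hsT]
  calc gStar ν φ t ≤ gnProc ν φ n t := iInf_le _ n
    _ = ((-((n : ℝ) * t) : ℝ) : EReal) + runningEssSup ν φ n t :=
      gnProc_eq_coe_add_runningEssSup
    _ ≤ ((-((n : ℝ) * t) : ℝ) : EReal) + ((c + n * t : ℝ) : EReal) := add_le_add_right hF _
    _ = c := by rw [← EReal.coe_add]; ring_nf

def cellEndpoints (ν : Measure ℝ) (φ : ℝ → ℝ) : Set ℝ :=
  range ((↑) : ℚ → ℝ) ∪ ⋃ n : ℕ, {x | ¬ContinuousAt (runningEssSup ν φ n) x}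

theorem countable_cellEndpoints (ν : Measure ℝ) (φ : ℝ → ℝ) : (cellEndpoints ν φ).Countable :=
  (countable_range _).union
    (countable_iUnion fun _ => runningEssSup_mono.countable_not_continuousAt)

theorem exists_cell_of_gStar_lt {ν : Measure ℝ} {φ : ℝ → ℝ} (hφ : Measurable φ) {t c : ℝ}
    (ht : 0 < t) (h : gStar ν φ t < c) :
    ∃ p : ℚ, ∃ q ∈ cellEndpoints ν φ, ∃ c' : ℚ, (p : ℝ) < t ∧ t ≤ q ∧ (c' : ℝ) < c ∧
      ∀ᵐ s ∂ν, s ∈ Ioc (p : ℝ) q → φ s ≤ c' := by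
  obtain ⟨n, hn⟩ := iInf_lt_iff.1 h
  obtain ⟨c', hnc', hc'c⟩ := EReal.lt_iff_exists_rat_btwn.1 hn
  obtain ⟨β, hFβ, hβ⟩ := EReal.lt_iff_exists_real_btwn.1 (runningEssSup_lt_of_gnProc_lt hnc')
  obtain ⟨q, hq, htq, hFq⟩ : ∃ q ∈ cellEndpoints ν φ, t ≤ q ∧ runningEssSup ν φ n q < β := by
    by_cases hcont : ContinuousAt (runningEssSup ν φ n) t
    · obtain ⟨u, htu, hu⟩ := mem_nhdsGT_iff_exists_Ioo_subset.1
        (nhdsWithin_le_nhds (hcont.eventually (eventually_lt_nhds hFβ)))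
      obtain ⟨r, htr, hru⟩ := exists_rat_btwn (mem_Ioi.1 htu)
      exact ⟨r, Or.inl ⟨r, rfl⟩, htr.le, hu ⟨htr, hru⟩⟩
    · exact ⟨t, Or.inr (mem_iUnion.2 ⟨n, hcont⟩), le_rfl, hFβ⟩
  have hβ' : β - c' < n * t := by linarith [EReal.coe_lt_coe_iff.1 hβ]
  have hnear : ∀ᶠ x in 𝓝 t, 0 < x ∧ β - c' < n * x :=
    (eventually_gt_nhds ht).and
      (((continuous_const.mul continuous_id).tendsto t).eventually (eventually_gt_nhds hβ'))
  obtain ⟨a, hat, ha⟩ := mem_nhdsLT_iff_exists_Ioo_subset.1 (nhdsWithin_le_nhds hnear)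
  obtain ⟨p, hap, hpt⟩ := exists_rat_btwn (mem_Iio.1 hat)
  obtain ⟨hp0, hp⟩ : 0 < (p : ℝ) ∧ β - c' < n * p := ha ⟨hap, hpt⟩
  refine ⟨p, q, hq, c', hpt, htq, EReal.coe_lt_coe_iff.1 hc'c, ?_⟩
  filter_upwards [(ae_restrict_iff' measurableSet_Ioc).1 (ae_le_of_runningEssSup_lt hφ hFq)]
    with s hs hspq
  nlinarith [hs ⟨hp0.trans hspq.1, hspq.2⟩, mul_le_mul_of_nonneg_left hspq.1.le n.cast_nonneg]

section Barriers

variable {T : ℝ} {μ κ : Measure ℝ} {l L Y Lm Ym : ℝ → ℝ}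

theorem ae_leftLim_le_max_of_cell (hL : IsCadlagOn L Lm T) (hY : IsCadlagOn Y Ym T)
    (hLY : ∀ t ∈ Ico (0 : ℝ) T, L t ≤ Y t) (hlY : ∀ᵐ t ∂μ, t ∈ Ioc (0 : ℝ) T → l t ≤ Ym t)
    (ha : ∀ Ls Lsm : ℝ → ℝ, IsCadlagOn Ls Lsm T → (∀ t ∈ Ico (0 : ℝ) T, L t ≤ Ls t ∧ Ls t ≤ Y t) →
      (∀ᵐ t ∂μ, t ∈ Ioc (0 : ℝ) T → l t ≤ Lsm t) →
      ∫⁻ t in Ioc (0 : ℝ) T, ENNReal.ofReal (Ym t - Lsm t) ∂κ = 0)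
    {p q c : ℝ} (hc : ∀ᵐ s ∂μ, s ∈ Ioc p q → l s ≤ c) :
    ∀ᵐ t ∂κ.restrict (Ioc 0 T), t ∈ Ioc p q → Ym t ≤ max (Lm t) c := by
  obtain ⟨M, hM⟩ := hY.exists_leftLim_le
  have hLs := hL.max (hY.min (isCadlagOn_ite_Ico p q c M T))
  have hLsY : ∀ t ∈ Ico (0 : ℝ) T,
      L t ≤ max (L t) (min (Y t) (if t ∈ Ico p q then c else M)) ∧
        max (L t) (min (Y t) (if t ∈ Ico p q then c else M)) ≤ Y t :=
    fun t ht => ⟨le_max_left _ _, max_le (hLY t ht) (min_le_left _ _)⟩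
  have hlLs : ∀ᵐ t ∂μ, t ∈ Ioc (0 : ℝ) T →
      l t ≤ max (Lm t) (min (Ym t) (if t ∈ Ioc p q then c else M)) := by
    filter_upwards [hlY, hc] with s hsY hsc hs
    refine le_max_of_le_right (le_min (hsY hs) ?_)
    split_ifs with hspq
    · exact hsc hspq
    · exact (hsY hs).trans (hM s hs)
  filter_upwards [hY.ae_leftLim_le_of_lintegral_eq_zero hLs (ha _ _ hLs hLsY hlLs)] with t ht htpq
  rw [if_pos htpq] at ht
  exact ht.trans (max_le_max le_rfl (min_le_right _ _))

theorem ae_leftLim_le_max_gStar (hl : Measurable l) (hL : IsCadlagOn L Lm T)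
    (hY : IsCadlagOn Y Ym T) (hLY : ∀ t ∈ Ico (0 : ℝ) T, L t ≤ Y t)
    (hlY : ∀ᵐ t ∂μ, t ∈ Ioc (0 : ℝ) T → l t ≤ Ym t)
    (ha : ∀ Ls Lsm : ℝ → ℝ, IsCadlagOn Ls Lsm T → (∀ t ∈ Ico (0 : ℝ) T, L t ≤ Ls t ∧ Ls t ≤ Y t) →
      (∀ᵐ t ∂μ, t ∈ Ioc (0 : ℝ) T → l t ≤ Lsm t) →
      ∫⁻ t in Ioc (0 : ℝ) T, ENNReal.ofReal (Ym t - Lsm t) ∂κ = 0) :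
    ∀ᵐ t ∂κ.restrict (Ioc 0 T), (Ym t : EReal) ≤ max (Lm t : EReal) (gStar μ l t) := by
  have hcells : ∀ᵐ t ∂κ.restrict (Ioc 0 T), ∀ p c : ℚ, ∀ q ∈ cellEndpoints μ l,
      (∀ᵐ s ∂μ, s ∈ Ioc (p : ℝ) q → l s ≤ c) → t ∈ Ioc (p : ℝ) q → Ym t ≤ max (Lm t) c := by
    refine ae_all_iff.2 fun p => ae_all_iff.2 fun c =>
      (ae_ball_iff (countable_cellEndpoints μ l)).2 fun q _ => ?_
    by_cases hc : ∀ᵐ s ∂μ, s ∈ Ioc (p : ℝ) q → l s ≤ c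
    · filter_upwards [ae_leftLim_le_max_of_cell hL hY hLY hlY ha hc] with t ht _ using ht
    · exact Eventually.of_forall fun _ h => absurd h hc
  filter_upwards [hcells, ae_restrict_mem measurableSet_Ioc] with t hcells ht
  by_contra! hlt
  obtain ⟨p, q, hq, c, hpt, htq, hcY, hc⟩ :=
    exists_cell_of_gStar_lt hl ht.1 ((le_max_right _ _).trans_lt hlt)
  have hLm : Lm t < Ym t := EReal.coe_lt_coe_iff.1 ((le_max_left _ _).trans_lt hlt)
  exact (hcells p c q hq hc ⟨hpt, htq⟩).not_gt (max_lt hLm hcY)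

end Barriers

theorem stmt_15_general (T : ℝ)
    (μ κ : Measure ℝ)
    (l : ℝ → ℝ) (hl : Measurable l)
    (L Y Lm Ym : ℝ → ℝ)
    (hLr : ∀ t ∈ Set.Ico (0 : ℝ) T, ContinuousWithinAt L (Set.Ici t) t)
    (hYr : ∀ t ∈ Set.Ico (0 : ℝ) T, ContinuousWithinAt Y (Set.Ici t) t)
    (hLl : ∀ t ∈ Set.Ioc (0 : ℝ) T, Tendsto L (𝓝[<] t) (𝓝 (Lm t)))
    (hYl : ∀ t ∈ Set.Ioc (0 : ℝ) T, Tendsto Y (𝓝[<] t) (𝓝 (Ym t)))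
    (hLY : ∀ t ∈ Set.Ico (0 : ℝ) T, L t ≤ Y t)
    (hlY : ∀ᵐ t ∂μ, t ∈ Set.Ioc (0 : ℝ) T → l t ≤ Ym t) :
    ((∀ Ls Lsm : ℝ → ℝ,
        (∀ t ∈ Set.Ico (0 : ℝ) T, ContinuousWithinAt Ls (Set.Ici t) t) →
        (∀ t ∈ Set.Ioc (0 : ℝ) T, Tendsto Ls (𝓝[<] t) (𝓝 (Lsm t))) →
        (∀ t ∈ Set.Ico (0 : ℝ) T, L t ≤ Ls t ∧ Ls t ≤ Y t) →
        (∀ᵐ t ∂μ, t ∈ Set.Ioc (0 : ℝ) T → l t ≤ Lsm t) →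
        ∫⁻ t in Set.Ioc (0 : ℝ) T, ENNReal.ofReal (Ym t - Lsm t) ∂κ = 0) ↔
      ∫⁻ t in Set.Ioc (0 : ℝ) T,
        erealToENNReal (((Ym t : ℝ) : EReal) - max ((Lm t : ℝ) : EReal) (gStar μ l t)) ∂κ
        = 0) := by
  have hL : IsCadlagOn L Lm T := ⟨hLr, hLl⟩
  have hY : IsCadlagOn Y Ym T := ⟨hYr, hYl⟩
  rw [show erealToENNReal = EReal.toENNReal from rfl]
  constructor
  · intro ha
    have h := ae_leftLim_le_max_gStar hl hL hY hLY hlY fun Ls Lsm hLs => ha Ls Lsm hLs.1 hLs.2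
    refine (lintegral_congr_ae (h.mono fun t ht => ?_)).trans lintegral_zero
    exact EReal.toENNReal_eq_zero_iff.2 (EReal.sub_nonpos.2 ht)
  · intro hb Ls Lsm hLsr hLsl hLs hlLs
    have hLs' : IsCadlagOn Ls Lsm T := ⟨hLsr, hLsl⟩
    refine nonpos_iff_eq_zero.1 (hb ▸ lintegral_mono_ae ?_)
    filter_upwards [ae_restrict_mem measurableSet_Ioc] with t ht
    have hLm : Lm t ≤ Lsm t := hL.leftLim_le hLs' (fun s hs => (hLs s hs).1) ht
    rw [← EReal.real_coe_toENNReal, EReal.coe_sub]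
    exact EReal.toENNReal_le_toENNReal (EReal.sub_le_sub le_rfl
      (max_le (EReal.coe_le_coe_iff.2 hLm) (hLs'.gStar_le_leftLim hlLs ht)))

/-- Let `L, Y : [0,T] → ℝ` be càdlàg (left limits `Lm, Ym`) with `L ≤ Y` on `[0,T)`,
`μ, κ` finite Borel measures on `(0,T]`, `l` Borel measurable with `l(t) ≤ Y(t−)` μ-a.e.
Then: (for every càdlàg `L*` with `L ≤ L* ≤ Y` on `[0,T)` and `l(t) ≤ L*(t−)` μ-a.e., one
has `∫_{(0,T]} (Y(t−) − L*(t−)) dκ = 0`) if and only if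
`∫_{(0,T]} (Y(t−) − max(L(t−), l^{*,μ}(t))) dκ = 0`, the (nonnegative) integrand in the
latter formed with the max in `ℝ ∪ {−∞}`. -/
theorem stmt_15 (T : ℝ) (hT : 0 < T)
    (μ κ : Measure ℝ) [IsFiniteMeasure μ] [IsFiniteMeasure κ]
    (hsuppμ : μ (Set.Ioc (0 : ℝ) T)ᶜ = 0) (hsuppκ : κ (Set.Ioc (0 : ℝ) T)ᶜ = 0)
    (l : ℝ → ℝ) (hl : Measurable l)
    (L Y Lm Ym : ℝ → ℝ)
    (hLr : ∀ t ∈ Set.Ico (0 : ℝ) T, ContinuousWithinAt L (Set.Ici t) t)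
    (hYr : ∀ t ∈ Set.Ico (0 : ℝ) T, ContinuousWithinAt Y (Set.Ici t) t)
    (hLl : ∀ t ∈ Set.Ioc (0 : ℝ) T, Tendsto L (𝓝[<] t) (𝓝 (Lm t)))
    (hYl : ∀ t ∈ Set.Ioc (0 : ℝ) T, Tendsto Y (𝓝[<] t) (𝓝 (Ym t)))
    (hLY : ∀ t ∈ Set.Ico (0 : ℝ) T, L t ≤ Y t)
    (hlY : ∀ᵐ t ∂μ, t ∈ Set.Ioc (0 : ℝ) T → l t ≤ Ym t) :
    ((∀ Ls Lsm : ℝ → ℝ,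
        (∀ t ∈ Set.Ico (0 : ℝ) T, ContinuousWithinAt Ls (Set.Ici t) t) →
        (∀ t ∈ Set.Ioc (0 : ℝ) T, Tendsto Ls (𝓝[<] t) (𝓝 (Lsm t))) →
        (∀ t ∈ Set.Ico (0 : ℝ) T, L t ≤ Ls t ∧ Ls t ≤ Y t) →
        (∀ᵐ t ∂μ, t ∈ Set.Ioc (0 : ℝ) T → l t ≤ Lsm t) →
        ∫⁻ t in Set.Ioc (0 : ℝ) T, ENNReal.ofReal (Ym t - Lsm t) ∂κ = 0) ↔
      ∫⁻ t in Set.Ioc (0 : ℝ) T,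
        erealToENNReal (((Ym t : ℝ) : EReal) - max ((Lm t : ℝ) : EReal) (gStar μ l t)) ∂κ
        = 0) :=
  stmt_15_general T μ κ l hl L Y Lm Ym hLr hYr hLl hYl hLY hlY
end
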